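/- arXiv:1804.07826 — 2 statements merged into one kernel-verified Lean document; each statement's English description precedes it below -/
import Mathlib

section
/- Let Φ ⊂ ℂ be a finite set with at least two elements, let M be an even positive integer (in the paper, a power of 2), let Θ be a random variable uniformly distributed on {2πl/M : l = 0, 1, …, M−1}, and let N be a circularly symmetric complex Gaussian random variable with variance σ² > 0. Then there is NO family of probability measures (F(·|s))_{s∈Φ} on ℂ with the following property: for all s, s′ ∈ Φ, if X ~ F(·|s), X′ ~ F(·|s′), Θ, and N are mutually independent, then the law of s + X′·e^{iΘ} + N equals the law of s′ + X·e^{iΘ} + N. In particular, the arbitrarily varying channel R = S + e^{iΘ}J + N corresponding to SP-OFDM is not l-symmetrizable. -/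
/-!
Pass to characteristic functions on `ℂ ≅ ℝ²`. Since `M` is even, `-1` is an `M`-th root of unity,
so `e^{iΘ}` is symmetric, hence so is `X e^{iΘ}` for every `X` independent of `Θ`, and its
characteristic function is real. The Gaussian noise has a nowhere vanishing characteristic
function and cancels, so symmetrizability for `s ≠ s'` would make a symmetric law the translate of
another symmetric law by `s - s'`: then `φ₁(t) = e^{i⟨s - s', t⟩} φ₂(t)` with `φ₁, φ₂` real, which
fails for small `t` in the direction of `s - s'`, where `φ₁(t) ≠ 0` and `sin ⟨s - s', t⟩ ≠ 0`.
-/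

open MeasureTheory ProbabilityTheory
open scoped NNReal ENNReal

/-- The law of a circularly symmetric complex Gaussian random variable with variance `v`. -/
noncomputable def gaussComplexLaw (v : ℝ≥0) : Measure ℂ :=
  ((gaussianReal 0 (v / 2)).prod (gaussianReal 0 (v / 2))).map
    (fun p : ℝ × ℝ => (p.1 : ℂ) + p.2 * Complex.I)

/-- The uniform distribution on the phase set `{2πl/M : l = 0, 1, …, M−1}`. -/
noncomputable def phaseLaw (M : ℕ) : Measure ℝ :=
  (M : ℝ≥0∞)⁻¹ • ∑ l ∈ Finset.range M, Measure.dirac (2 * Real.pi * l / M)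

open Complex Filter Topology
open scoped RealInnerProductSpace ComplexConjugate

section CharFun

variable {E : Type*} [NormedAddCommGroup E] [InnerProductSpace ℝ E] [MeasurableSpace E]
  [BorelSpace E]

lemma charFun_ne_zero_of_isGaussian (G : Measure E) [IsGaussian G] (t : E) :
    charFun G t ≠ 0 := by
  rw [IsGaussian.charFun_eq]
  exact Complex.exp_ne_zero _

lemma conj_charFun_of_isNegInvariant (μ : Measure E) [μ.IsNegInvariant] (t : E) :
    conj (charFun μ t) = charFun μ t := by
  conv_rhs => rw [← μ.neg_eq_self]
  rw [← charFun_neg, charFun_apply, charFun_apply, Measure.neg_def,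
    integral_map (by fun_prop) (by fun_prop)]
  simp [inner_neg_left, inner_neg_right]

variable [SecondCountableTopology E]

lemma exists_charFun_ne_zero_and_sin_inner_ne_zero (μ : Measure E) [IsProbabilityMeasure μ]
    {d : E} (hd : d ≠ 0) : ∃ t, charFun μ t ≠ 0 ∧ Real.sin ⟪d, t⟫ ≠ 0 := by
  have hcont : Continuous fun ε : ℝ => charFun μ (ε • d) := by fun_prop
  have hne : ∀ᶠ ε in 𝓝 (0 : ℝ), charFun μ (ε • d) ≠ 0 :=
    hcont.continuousAt.eventually_ne (by simp)
  have hd2 : 0 < ‖d‖ ^ 2 := by positivity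
  have hsin : ∀ᶠ ε in 𝓝[>] (0 : ℝ), Real.sin ⟪d, ε • d⟫ ≠ 0 := by
    filter_upwards [Ioo_mem_nhdsGT (div_pos Real.pi_pos hd2)] with ε ⟨hε_pos, hε_lt⟩
    rw [inner_smul_right, real_inner_self_eq_norm_sq]
    rw [lt_div_iff₀ hd2] at hε_lt
    exact (Real.sin_pos_of_pos_of_lt_pi (by positivity) hε_lt).ne'
  obtain ⟨ε, hε_sin, hε_ne⟩ := (hsin.and (nhdsWithin_le_nhds hne)).exists
  exact ⟨ε • d, hε_ne, hε_sin⟩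

lemma eq_of_map_const_add_eq_of_isNegInvariant {ν₁ ν₂ : Measure E} [IsProbabilityMeasure ν₁]
    [IsProbabilityMeasure ν₂] [ν₁.IsNegInvariant] [ν₂.IsNegInvariant] {a b : E}
    (h : ν₁.map (a + ·) = ν₂.map (b + ·)) : a = b := by
  by_contra hab
  obtain ⟨t, hφ, hsin⟩ := exists_charFun_ne_zero_and_sin_inner_ne_zero ν₁ (sub_ne_zero.mpr hab)
  have hreal : ∀ ν : Measure E, [ν.IsNegInvariant] → charFun ν t = ((charFun ν t).re : ℂ) :=
    fun ν _ => (conj_eq_iff_re.mp (conj_charFun_of_isNegInvariant ν t)).symm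
  have key : charFun ν₁ t * cexp (⟪a - b, t⟫ * I) = charFun ν₂ t := by
    have h' := congrArg (charFun · t) h
    simp only [charFun_map_const_add] at h'
    rw [inner_sub_left, ofReal_sub, sub_mul, Complex.exp_sub, ← mul_div_assoc, h',
      mul_div_cancel_right₀ _ (Complex.exp_ne_zero _)]
  have him := congrArg Complex.im key
  rw [hreal ν₁, hreal ν₂, im_ofReal_mul, exp_ofReal_mul_I_im, ofReal_im] at him
  rw [hreal ν₁, ne_eq, ofReal_eq_zero] at hφ
  exact mul_ne_zero hφ hsin him

lemma conv_right_cancel_of_isGaussian [CompleteSpace E] {μ ν G : Measure E} [IsFiniteMeasure μ]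
    [IsFiniteMeasure ν] [IsGaussian G] (h : μ ∗ G = ν ∗ G) : μ = ν := by
  refine Measure.ext_of_charFun (funext fun t => ?_)
  have h' := congrArg (charFun · t) h
  simp only [charFun_conv] at h'
  exact mul_right_cancel₀ (charFun_ne_zero_of_isGaussian G t) h'

end CharFun

instance isNegInvariant_mconv {R : Type*} [Monoid R] [HasDistribNeg R] [MeasurableSpace R]
    [MeasurableMul₂ R] [MeasurableNeg R] (μ ν : Measure R) [SigmaFinite μ] [SigmaFinite ν]
    [ν.IsNegInvariant] : (μ ∗ₘ ν).IsNegInvariant := by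
  constructor
  have hcomp : (Neg.neg ∘ fun x : R × R => x.1 * x.2) =
      (fun x : R × R => x.1 * x.2) ∘ Prod.map id Neg.neg := by
    funext x
    simp
  rw [Measure.neg_def, Measure.mconv, Measure.map_map (by fun_prop) (by fun_prop), hcomp,
    ← Measure.map_map (by fun_prop) (by fun_prop), ← Measure.map_prod_map _ _ (by fun_prop)
    (by fun_prop), Measure.map_id, ← Measure.neg_def, Measure.neg_eq_self]

instance isGaussian_gaussComplexLaw (v : ℝ≥0) : IsGaussian (gaussComplexLaw v) := by
  have hlin : (fun p : ℝ × ℝ => (p.1 : ℂ) + p.2 * I) = (equivRealProdCLM.symm : ℝ × ℝ →L[ℝ] ℂ) :=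
    funext fun p => (equivRealProdCLM_symm_apply p).symm
  rw [gaussComplexLaw, hlin]
  infer_instance

lemma isProbabilityMeasure_phaseLaw {M : ℕ} (hM : M ≠ 0) : IsProbabilityMeasure (phaseLaw M) := by
  constructor
  simp [phaseLaw, ENNReal.inv_mul_cancel, hM]

lemma map_phaseLaw {X : Type*} [MeasurableSpace X] [MeasurableSingletonClass X] (M : ℕ)
    {f : ℝ → X} (hf : Measurable f) :
    (phaseLaw M).map f =
      (M : ℝ≥0∞)⁻¹ • ∑ l ∈ Finset.range M, Measure.dirac (f (2 * Real.pi * l / M)) := by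
  rw [phaseLaw, Measure.map_smul, Measure.map_finset_sum hf.aemeasurable]
  simp only [Measure.map_dirac' hf]

lemma isNegInvariant_map_cexp_phaseLaw {M : ℕ} (hM : Even M) :
    ((phaseLaw M).map fun θ : ℝ => cexp (I * θ)).IsNegInvariant := by
  obtain ⟨m, rfl⟩ := hM
  rcases eq_or_ne m 0 with rfl | hm
  · constructor
    simp [phaseLaw, Measure.neg_def]
  have half_turn : ∀ l : ℕ, cexp (I * ↑(2 * Real.pi * ↑(m + l) / ↑(m + m))) =
      -cexp (I * ↑(2 * Real.pi * l / ↑(m + m))) := by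
    intro l
    have : (2 * Real.pi * ↑(m + l) / ↑(m + m) : ℝ) = 2 * Real.pi * l / ↑(m + m) + Real.pi := by
      push_cast
      field_simp
      ring
    rw [this, ofReal_add, mul_add, Complex.exp_add, mul_comm I (Real.pi : ℂ), exp_pi_mul_I,
      mul_neg_one]
  constructor
  rw [Measure.neg_def, Measure.map_map (by fun_prop) (by fun_prop), map_phaseLaw _ (by fun_prop),
    map_phaseLaw _ (by fun_prop)]
  congr 1
  simp only [Function.comp_apply, Finset.sum_range_add, half_turn, neg_neg]
  exact add_comm _ _

lemma map_channel_eq_conv (μ G : Measure ℂ) (P : Measure ℝ) [SigmaFinite μ] [SigmaFinite P]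
    [SigmaFinite G] (s : ℂ) :
    (μ.prod (P.prod G)).map (fun q : ℂ × ℝ × ℂ => s + q.1 * cexp (I * q.2.1) + q.2.2) =
      ((μ ∗ₘ P.map fun θ : ℝ => cexp (I * θ)).map (s + ·)) ∗ G := by
  have hrot : (μ ∗ₘ P.map fun θ : ℝ => cexp (I * θ)).map (s + ·) =
      (μ.prod P).map fun p : ℂ × ℝ => s + p.1 * cexp (I * p.2) := by
    rw [Measure.mconv, ← Measure.map_id (μ := μ), Measure.map_prod_map _ _ (by fun_prop)
      (by fun_prop), Measure.map_id, Measure.map_map (by fun_prop) (by fun_prop),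
      Measure.map_map (by fun_prop) (by fun_prop)]
    rfl
  rw [hrot, Measure.conv, ← Measure.map_id (μ := G), Measure.map_prod_map _ _ (by fun_prop)
    (by fun_prop), Measure.map_id, Measure.map_map (by fun_prop) (by fun_prop),
    ← Measure.prodAssoc_prod, Measure.map_map (by fun_prop) (by fun_prop)]
  rfl

theorem SP_OFDM_not_l_symmetrizable_general (Φ : Finset ℂ) (hΦ : 2 ≤ Φ.card)
    (M : ℕ) (hM : 0 < M) (hMeven : Even M) (v : ℝ≥0) :
    ¬ ∃ F : ℂ → Measure ℂ,
      (∀ s ∈ Φ, IsProbabilityMeasure (F s)) ∧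
      (∀ s ∈ Φ, ∀ s' ∈ Φ,
        Measure.map (fun q : ℂ × ℝ × ℂ => s + q.1 * Complex.exp (Complex.I * q.2.1) + q.2.2)
          ((F s').prod ((phaseLaw M).prod (gaussComplexLaw v))) =
        Measure.map (fun q : ℂ × ℝ × ℂ => s' + q.1 * Complex.exp (Complex.I * q.2.1) + q.2.2)
          ((F s).prod ((phaseLaw M).prod (gaussComplexLaw v)))) := by
  rintro ⟨F, hF_prob, hF⟩
  obtain ⟨s₁, hs₁, s₂, hs₂, hne⟩ := Finset.one_lt_card.mp hΦ
  have := isProbabilityMeasure_phaseLaw hM.ne'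
  have : IsProbabilityMeasure ((phaseLaw M).map fun θ : ℝ => cexp (I * θ)) :=
    Measure.isProbabilityMeasure_map (by fun_prop)
  have := isNegInvariant_map_cexp_phaseLaw hMeven
  have := hF_prob s₁ hs₁
  have := hF_prob s₂ hs₂
  have h := hF s₁ hs₁ s₂ hs₂
  rw [map_channel_eq_conv, map_channel_eq_conv] at h
  exact hne (eq_of_map_const_add_eq_of_isNegInvariant (conv_right_cancel_of_isGaussian h))

/-- The SP-OFDM arbitrarily varying channel `R = S + e^{iΘ}J + N` is not l-symmetrizable:
there is no family of probability measures `F (·|s)` on `ℂ` such that for all `s, s' ∈ Φ`,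
the law of `s + X'·e^{iΘ} + N` (with `X' ~ F(·|s')`, `Θ` uniform on the `M`-PSK phases and
`N` circularly symmetric complex Gaussian, all mutually independent) equals the law of
`s' + X·e^{iΘ} + N` (with `X ~ F(·|s)`). -/
theorem SP_OFDM_not_l_symmetrizable (Φ : Finset ℂ) (hΦ : 2 ≤ Φ.card)
    (M : ℕ) (hM : 0 < M) (hMeven : Even M) (v : ℝ≥0) (hv : 0 < v) :
    ¬ ∃ F : ℂ → Measure ℂ,
      (∀ s ∈ Φ, IsProbabilityMeasure (F s)) ∧
      (∀ s ∈ Φ, ∀ s' ∈ Φ,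
        Measure.map (fun q : ℂ × ℝ × ℂ => s + q.1 * Complex.exp (Complex.I * q.2.1) + q.2.2)
          ((F s').prod ((phaseLaw M).prod (gaussComplexLaw v))) =
        Measure.map (fun q : ℂ × ℝ × ℂ => s' + q.1 * Complex.exp (Complex.I * q.2.1) + q.2.2)
          ((F s).prod ((phaseLaw M).prod (gaussComplexLaw v)))) :=
  SP_OFDM_not_l_symmetrizable_general Φ hΦ M hM hMeven v
end

section
/- Let U and V be ℂ-valued random variables whose characteristic functions φ_U(ω₁,ω₂) = E[exp(i(ω₁ Re U + ω₂ Im U))] and φ_V(ω₁,ω₂) = E[exp(i(ω₁ Re V + ω₂ Im V))] are real-valued at every point (ω₁,ω₂) ∈ ℝ². If there exists c ∈ ℂ such that c + U has the same distribution as V, then c = 0. -/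
open MeasureTheory ProbabilityTheory

/-- The characteristic function of a complex-valued distribution `ν`, evaluated at
`(ω₁, ω₂) ∈ ℝ²`: `φ_ν(ω₁,ω₂) = E[exp(i(ω₁ Re X + ω₂ Im X))]` for `X ~ ν`. -/
noncomputable def charFunC (ν : Measure ℂ) (w : ℝ × ℝ) : ℂ :=
  ∫ z, Complex.exp (Complex.I * ((w.1 * z.re + w.2 * z.im : ℝ) : ℂ)) ∂ν

/-! Shifting a law by `r` multiplies its characteristic function by `exp(i⟪r, t⟫)`. If both
characteristic functions are real, then wherever `φ(t) ≠ 0` this phase is real, i.e.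
`sin ⟪r, t⟫ = 0`. Since `φ(0) = 1`, `φ` does not vanish near `0`; along `t = s • r` with small
`s > 0` this forces `sin (s ‖r‖²) = 0` with `0 < s ‖r‖² < π`, which is impossible unless `r = 0`. -/

open Complex Filter Topology RealInnerProductSpace

lemma charFun_eq_charFunC (ν : Measure ℂ) (t : ℂ) : charFun ν t = charFunC ν (t.re, t.im) := by
  simp only [charFun_apply, charFunC, Complex.inner, mul_comm I]
  congr with z
  simp [mul_comm]

lemma sin_eq_zero_of_im_mul_exp_eq_zero {z : ℂ} {θ : ℝ} (hz : z ≠ 0) (hz_im : z.im = 0)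
    (h : (z * cexp (θ * I)).im = 0) : Real.sin θ = 0 := by
  have hz_re : z.re ≠ 0 := fun h' => hz (Complex.ext h' hz_im)
  rw [mul_im, exp_ofReal_mul_I_im, exp_ofReal_mul_I_re, hz_im, zero_mul, add_zero] at h
  exact (mul_eq_zero.mp h).resolve_left hz_re

lemma eventually_charFun_ne_zero {E : Type*} [NormedAddCommGroup E] [InnerProductSpace ℝ E]
    [MeasurableSpace E] [BorelSpace E] [SecondCountableTopology E]
    (ν : Measure E) [IsProbabilityMeasure ν] : ∀ᶠ t in 𝓝 0, charFun ν t ≠ 0 :=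
  (continuous_charFun.tendsto' 0 1 (by simp)).eventually_ne one_ne_zero

theorem eq_zero_of_im_charFun_eq_zero_of_map_const_add
    {E : Type*} [NormedAddCommGroup E] [InnerProductSpace ℝ E] [MeasurableSpace E] [BorelSpace E]
    [SecondCountableTopology E] {ν : Measure E} [IsProbabilityMeasure ν] {r : E}
    (hν : ∀ t, (charFun ν t).im = 0) (hr : ∀ t, (charFun (ν.map (r + ·)) t).im = 0) :
    r = 0 := by
  by_contra hr0
  have hrr : 0 < ⟪r, r⟫ := real_inner_self_pos.mpr hr0
  have h_ne : ∀ᶠ s in 𝓝[>] (0 : ℝ), charFun ν (s • r) ≠ 0 := by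
    have h_smul : Tendsto (fun s : ℝ => s • r) (𝓝 0) (𝓝 0) :=
      (by fun_prop : Continuous fun s : ℝ => s • r).tendsto' 0 0 (zero_smul ℝ r)
    exact nhdsWithin_le_nhds (h_smul.eventually (eventually_charFun_ne_zero ν))
  have h_lt : ∀ᶠ s in 𝓝[>] (0 : ℝ), s * ⟪r, r⟫ < Real.pi := by
    have h_mul : Tendsto (fun s : ℝ => s * ⟪r, r⟫) (𝓝 0) (𝓝 0) :=
      (by fun_prop : Continuous fun s : ℝ => s * ⟪r, r⟫).tendsto' 0 0 (zero_mul _)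
    exact nhdsWithin_le_nhds (h_mul.eventually (gt_mem_nhds Real.pi_pos))
  obtain ⟨s, hs_ne, hs_lt, hs_pos⟩ := (h_ne.and (h_lt.and self_mem_nhdsWithin)).exists
  have h_sin : Real.sin (s * ⟪r, r⟫) = 0 := by
    refine sin_eq_zero_of_im_mul_exp_eq_zero hs_ne (hν _) ?_
    rw [← inner_smul_right, ← charFun_map_const_add]
    exact hr _
  exact (Real.sin_pos_of_pos_of_lt_pi (mul_pos hs_pos hrr) hs_lt).ne' h_sin

theorem translation_of_real_charFun_is_zero_general
    {Ω : Type*} [MeasurableSpace Ω] (μ : Measure Ω) [IsProbabilityMeasure μ]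
    (U V : Ω → ℂ) (hU : AEMeasurable U μ)
    (hUreal : ∀ w : ℝ × ℝ, (charFunC (μ.map U) w).im = 0)
    (hVreal : ∀ w : ℝ × ℝ, (charFunC (μ.map V) w).im = 0)
    (c : ℂ) (hlaw : μ.map (fun ω => c + U ω) = μ.map V) :
    c = 0 := by
  have : IsProbabilityMeasure (μ.map U) := Measure.isProbabilityMeasure_map hU
  have h_shift : (μ.map U).map (c + ·) = μ.map V := by
    rw [AEMeasurable.map_map_of_aemeasurable (by fun_prop) hU]
    exact hlaw
  refine eq_zero_of_im_charFun_eq_zero_of_map_const_add (ν := μ.map U)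
    (fun t => ?_) (fun t => ?_)
  · rw [charFun_eq_charFunC]
    exact hUreal _
  · rw [h_shift, charFun_eq_charFunC]
    exact hVreal _

/-- If `U` and `V` are complex-valued random variables whose characteristic functions are
real-valued everywhere, and `c + U` has the same distribution as `V` for some `c ∈ ℂ`,
then `c = 0`. -/
theorem translation_of_real_charFun_is_zero
    {Ω : Type*} [MeasurableSpace Ω] (μ : Measure Ω) [IsProbabilityMeasure μ]
    (U V : Ω → ℂ) (hU : AEMeasurable U μ) (hV : AEMeasurable V μ)
    (hUreal : ∀ w : ℝ × ℝ, (charFunC (μ.map U) w).im = 0)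
    (hVreal : ∀ w : ℝ × ℝ, (charFunC (μ.map V) w).im = 0)
    (c : ℂ) (hlaw : μ.map (fun ω => c + U ω) = μ.map V) :
    c = 0 :=
  translation_of_real_charFun_is_zero_general μ U V hU hUreal hVreal c hlaw
end
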